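/- arXiv:1203.0359 — 2 statements merged into one kernel-verified Lean document; each statement's English description precedes it below -/
import Mathlib

section
/- Let G be a finite group of the form G = H × K, and identify G/K with H. Then for every i ≥ 2, every f ∈ Ĥ^{−i}(G, ℤ), and every ψ ∈ Ĥ^{i}(H, ℤ), one has f ∪ Inf^G_H(ψ) = Cor^G_H(Rsd^G_H(f) ∪ ψ) in Ĥ^0(G, ℤ); that is, the residuation map Rsd^G_H : Ĥ^{−i}(G, ℤ) → Ĥ^{−i}(H, ℤ) and the inflation map Inf^G_H : Ĥ^{i}(H, ℤ) → Ĥ^{i}(G, ℤ) are adjoint with respect to the perfect cup-product pairings Ĥ^{−i} × Ĥ^{i} → Ĥ^{0}. -/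
/-- A homogeneous `n`-cochain of `G` with coefficients in the trivial `G`-module `ℤ`:
a function on `(n+1)`-tuples invariant under simultaneous left translation. -/
def IsHomogeneousCochain (G : Type*) [Group G] (n : ℕ) (c : (Fin (n + 1) → G) → ℤ) : Prop :=
  ∀ (g : G) (x : Fin (n + 1) → G), c (fun j => g * x j) = c x

/-- The differential on homogeneous cochains with coefficients in `ℤ`. -/
def cochainDiff (G : Type*) [Group G] (n : ℕ) (c : (Fin (n + 1) → G) → ℤ) :
    (Fin (n + 2) → G) → ℤ :=
  fun x => ∑ j : Fin (n + 2), (-1 : ℤ) ^ (j : ℕ) * c (x ∘ j.succAbove)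

/-- A negative-degree cochain of `G`, i.e. an element of `Hom_G(X_{-n}, ℤ)` for the
standard complete resolution `X`:  a function on `n`-tuples (the dual basis elements
`(s₁^*, …, s_n^*)`) invariant under simultaneous left translation. -/
def IsNegCochain (G : Type*) [Group G] (n : ℕ) (f : (Fin n → G) → ℤ) : Prop :=
  ∀ (g : G) (s : Fin n → G), f (fun j => g * s j) = f s

/-- The cocycle condition in degree `-(n+1)`:  the composite of `f ∈ Hom_G(X_{-(n+1)}, ℤ)`
with the differential `d : X_{-n} → X_{-(n+1)}`,
`d(s₁^*, …, s_n^*) = ∑_{j=1}^{n+1} ∑_{g ∈ G} (-1)^j (s₁^*, …, s_{j-1}^*, g^*, s_j^*, …, s_n^*)`,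
vanishes. -/
def IsNegCocycle (G : Type*) [Group G] [Fintype G] (n : ℕ) (f : (Fin (n + 1) → G) → ℤ) :
    Prop :=
  ∀ s : Fin n → G,
    ∑ t : Fin (n + 1), (-1 : ℤ) ^ ((t : ℕ) + 1) * ∑ g : G, f (Fin.insertNth t g s) = 0

/-! Since the inflated cocycle only sees the `H`-coordinates, the left side is a sum over
`h ∈ Hⁱ` of `ψ(h)` times the fiber sum `∑_{k ∈ Kⁱ} f(h, k)`.  Invariance of `f` under left
translation by `(1, k₁)` lets one normalise `k₁ = 1` in each fiber, at the cost of the factor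
`|K|`, and the two sides then agree on the nose. -/

theorem IsNegCochain.fiber {H K : Type*} [Group H] [Group K] {n : ℕ}
    {f : (Fin n → H × K) → ℤ} (hf : IsNegCochain (H × K) n f) (h : Fin n → H) :
    IsNegCochain K n fun k => f fun j => (h j, k j) := fun k₀ k => by
  simpa using hf (1, k₀) fun j => (h j, k j)

theorem IsNegCochain.sum_eq_card_mul_sum_cons_one {K : Type*} [Group K] [Fintype K] {n : ℕ}
    {F : (Fin (n + 1) → K) → ℤ} (hF : IsNegCochain K (n + 1) F) :
    ∑ k, F k = Fintype.card K * ∑ k : Fin n → K, F (Fin.cons 1 k) := by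
  have hslice : ∀ k₀ : K, ∑ k : Fin n → K, F (Fin.cons k₀ k) = ∑ k, F (Fin.cons 1 k) := by
    intro k₀
    rw [← (Equiv.piCongrRight fun _ => Equiv.mulLeft k₀).sum_comp]
    refine Finset.sum_congr rfl fun k _ => ?_
    rw [← hF k₀ (Fin.cons 1 k)]
    congr 1
    funext j
    cases j using Fin.cases <;> simp
  rw [← (Fin.consEquiv fun _ => K).sum_comp, Fintype.sum_prod_type]
  simp [Fin.consEquiv, hslice]

theorem Fintype.sum_pi_prod {ι α β M : Type*} [Fintype ι] [DecidableEq ι] [Fintype α]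
    [Fintype β] [AddCommMonoid M] (F : (ι → α × β) → M) :
    ∑ s, F s = ∑ a : ι → α, ∑ b : ι → β, F fun i => (a i, b i) := by
  rw [← (Equiv.arrowProdEquivProdArrow ι (fun _ => α) (fun _ => β)).symm.sum_comp,
    Fintype.sum_prod_type]
  rfl

/-- On cocycle representatives (`i = m + 2`): the cup product `Ĥ^{-i} × Ĥ^i → Ĥ^0` is
`(f, φ) ↦ ∑_{s ∈ Gⁱ} f(s₁, …, s_i) φ(s_i, …, s₁, g₀)`, inflation is `ψ ∘ π`, the residuation
of `f` is `(h₁, …, h_i) ↦ ∑_{k ∈ K^{i-1}} f((h₁,1), (h₂,k₂), …, (h_i,k_i))`, and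
corestriction `ℤ/|H| → ℤ/|G|` is multiplication by `[G : H] = |K|`. -/
theorem residuation_inflation_adjoint_general
    (H K : Type*) [Group H] [Group K] [Fintype H] [Fintype K] (m : ℕ)
    (f : (Fin (m + 2) → H × K) → ℤ)
    (hfinv : IsNegCochain (H × K) (m + 2) f)
    (ψ : (Fin (m + 3) → H) → ℤ)
    (g₀ : H × K) :
    Int.ModEq (Fintype.card (H × K))
      (∑ s : Fin (m + 2) → H × K,
        f s * ψ (Fin.snoc (fun j => (s (Fin.rev j)).1) g₀.1))
      ((Fintype.card K) * ∑ h : Fin (m + 2) → H,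
        (∑ k : Fin (m + 1) → K,
            f (fun j => (h j, Fin.cases 1 (fun t => k t) j))) *
          ψ (Fin.snoc (fun j => h (Fin.rev j)) g₀.1)) := by
  refine congrArg (· % _) ?_
  rw [Fintype.sum_pi_prod, Finset.mul_sum]
  refine Finset.sum_congr rfl fun h _ => ?_
  dsimp only
  rw [← Finset.sum_mul, (hfinv.fiber h).sum_eq_card_mul_sum_cons_one, mul_assoc]
  rfl

/-- **Lemma 5.**  Let `G = H × K` be a finite group, and identify `G/K` with `H`.  For
`i ≥ 2` (here `i = m + 2`), the residuation map `Rsd^G_H : Ĥ^{-i}(G, ℤ) → Ĥ^{-i}(H, ℤ)`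
and the inflation map `Inf^G_H : Ĥ^i(H, ℤ) → Ĥ^i(G, ℤ)` are adjoint for the cup-product
pairings into `Ĥ^0`:  `f ∪ Inf^G_H ψ = Cor^G_H (Rsd^G_H f ∪ ψ)` in `Ĥ^0(G, ℤ) = ℤ/|G|ℤ`.
Stated on cocycle representatives via the explicit formulas for the cup product, the
residuation map `(Rsd f)(h₁^*, …, h_i^*) = ∑_{k_j ∈ K} f(h₁^*, (h₂k₂)^*, …, (h_i k_i)^*)`,
the inflation `(Inf ψ)(g₀, …, g_i) = ψ(π g₀, …, π g_i)` and the corestriction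
`Cor : ℤ/|H|ℤ → ℤ/|G|ℤ`, `c ↦ [G : H]·c`, this reads: for every `g₀ = (h₀, k₀) ∈ G`,
`∑_{s ∈ G^i} f(s₁, …, s_i) ψ(π s_i, …, π s₁, h₀)` is congruent modulo `|G|` to
`|K| · ∑_{h ∈ H^i} (∑_{k ∈ K^{i-1}} f((h₁,1), (h₂,k₂), …, (h_i,k_i))) ψ(h_i, …, h₁, h₀)`. -/
theorem residuation_inflation_adjoint
    (H K : Type*) [Group H] [Group K] [Fintype H] [Fintype K] (m : ℕ)
    (f : (Fin (m + 2) → H × K) → ℤ)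
    (hfinv : IsNegCochain (H × K) (m + 2) f)
    (hfcoc : IsNegCocycle (H × K) (m + 1) f)
    (ψ : (Fin (m + 3) → H) → ℤ)
    (hψinv : IsHomogeneousCochain H (m + 2) ψ)
    (hψcoc : cochainDiff H (m + 2) ψ = 0)
    (g₀ : H × K) :
    Int.ModEq (Fintype.card (H × K))
      (∑ s : Fin (m + 2) → H × K,
        f s * ψ (Fin.snoc (fun j => (s (Fin.rev j)).1) g₀.1))
      ((Fintype.card K) * ∑ h : Fin (m + 2) → H,
        (∑ k : Fin (m + 1) → K,
            f (fun j => (h j, Fin.cases 1 (fun t => k t) j))) *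
          ψ (Fin.snoc (fun j => h (Fin.rev j)) g₀.1)) :=
  residuation_inflation_adjoint_general H K m f hfinv ψ g₀
end

section
/- Let p be a prime, let L₁ and L₂ be separable extensions of degree p of a field K, and let E₁ and E₂ be their Galois closures over K. Then either the degree [E₁ ∩ E₂ : K] is prime to p, or E₁ = E₂. -/
open IntermediateField

/-- `E` is the Galois closure of `L` over `K`: the smallest Galois extension
of `K` containing `L`. -/
def IsGaloisClosure {K Ω : Type*} [Field K] [Field Ω] [Algebra K Ω]
    (L E : IntermediateField K Ω) : Prop :=
  L ≤ E ∧ IsGalois K ↥E ∧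
    ∀ E' : IntermediateField K Ω, L ≤ E' → IsGalois K ↥E' → E ≤ E'

/-!
A Galois closure `E` of a separable extension `L = K(a)` of prime degree `p` is the
splitting field of the minimal polynomial of `a`, so `[E : K]` divides `p!` and `p²` does
not divide it. If `F ⊆ E` is Galois over `K` and `p ∣ [F : K]`, then `L ⊆ F`: otherwise
`L ∩ F = K`, so `L` and `F` are linearly disjoint and `p² ∣ [LF : K] ∣ [E : K]`. Minimality
of `E` then gives `E ⊆ F`. Taking `F = E₁ ∩ E₂` shows `E₁ = E₂` as soon as
`p ∣ [E₁ ∩ E₂ : K]`.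
-/

open Polynomial Module
open scoped Nat

theorem Nat.Prime.not_mul_self_dvd_factorial {p : ℕ} (hp : p.Prime) : ¬ p * p ∣ p ! := by
  rw [← Nat.mul_factorial_pred hp.ne_zero, Nat.mul_dvd_mul_iff_left hp.pos, hp.dvd_factorial]
  have := hp.pos
  omega

theorem Polynomial.IsSplittingField.finrank_dvd_factorial {K M : Type*} [Field K] [Field M]
    [Algebra K M] {f : K[X]} [IsSplittingField K M f] (hf : f.Separable) :
    finrank K M ∣ f.natDegree ! := by
  classical
  have hsplit := SplittingField.splits f
  have : Fact ((f.map (algebraMap K f.SplittingField)).Splits) := ⟨hsplit⟩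
  have hperm := Subgroup.card_dvd_of_injective _ (Gal.galActionHom_injective f f.SplittingField)
  rw [Nat.card_eq_fintype_card (α := Equiv.Perm _), Fintype.card_perm,
    card_rootSet_eq_natDegree hf hsplit, Gal.card_of_separable hf] at hperm
  rwa [(IsSplittingField.algEquiv M f).toLinearEquiv.finrank_eq]

section

variable {K Ω : Type*} [Field K] [Field Ω] [Algebra K Ω]

theorem IntermediateField.le_or_inf_eq_bot_of_finrank_prime {L : IntermediateField K Ω}
    (hL : (finrank K L).Prime) (M : IntermediateField K Ω) : L ≤ M ∨ L ⊓ M = ⊥ := by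
  have : FiniteDimensional K L := .of_finrank_pos hL.pos
  have hdvd : finrank K ↥(L ⊓ M) ∣ finrank K L := finrank_dvd_of_le_right inf_le_left
  rcases hL.eq_one_or_self_of_dvd _ hdvd with h | h
  · exact .inr (finrank_eq_one_iff.mp h)
  · exact .inl (inf_eq_left.mp (eq_of_le_of_finrank_eq inf_le_left h))

theorem IntermediateField.exists_eq_adjoin_simple (L : IntermediateField K Ω)
    [FiniteDimensional K L] [Algebra.IsSeparable K L] : ∃ a : Ω, L = K⟮a⟯ := by
  obtain ⟨α, hα⟩ := Field.exists_primitive_element K L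
  exact ⟨α, by rw [← lift_adjoin_simple, hα, lift_top]⟩

theorem IsGaloisClosure.isSplittingField_minpoly {a : Ω} {E : IntermediateField K Ω}
    (hE : IsGaloisClosure K⟮a⟯ E) : IsSplittingField K E (minpoly K a) := by
  obtain ⟨haE, hgal, hmin⟩ := hE
  let x : E := ⟨a, haE (mem_adjoin_simple_self K a)⟩
  have hsplit : ((minpoly K a).map (algebraMap K E)).Splits :=
    minpoly_eq x ▸ hgal.to_normal.splits x
  have hsep : (minpoly K a).Separable := minpoly_eq x ▸ Algebra.IsSeparable.isSeparable K x
  have hsplitΩ : ((minpoly K a).map (algebraMap K Ω)).Splits := by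
    simpa [Polynomial.map_map] using hsplit.map E.val.toRingHom
  refine isSplittingField_iff.mpr ⟨hsplit, le_antisymm ?_ ?_⟩
  · have := adjoin_rootSet_isSplittingField hsplitΩ
    refine hmin _ (adjoin_simple_le_iff.mpr (subset_adjoin _ _ ?_))
      (IsGalois.of_separable_splitting_field hsep)
    exact mem_rootSet.mpr ⟨hsep.ne_zero, minpoly.aeval K a⟩
  · exact adjoin_le_iff.mpr fun y hy => (splits_iff_mem hsplitΩ).mp hsplit y hy

theorem IsGaloisClosure.exists_isSplittingField {L E : IntermediateField K Ω}
    (hE : IsGaloisClosure L E) [FiniteDimensional K L] :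
    ∃ f : K[X], f.Separable ∧ f.natDegree = finrank K L ∧ IsSplittingField K E f := by
  have := hE.2.1
  have : Algebra.IsSeparable K L := .of_algHom K E (inclusion hE.1)
  obtain ⟨a, rfl⟩ := L.exists_eq_adjoin_simple
  have hsep : IsSeparable K a := (isSeparable_adjoin_simple_iff_isSeparable K Ω).mp ‹_›
  exact ⟨minpoly K a, hsep, (adjoin.finrank hsep.isIntegral).symm, hE.isSplittingField_minpoly⟩

theorem IsGaloisClosure.finiteDimensional {L E : IntermediateField K Ω}
    (hE : IsGaloisClosure L E) [FiniteDimensional K L] : FiniteDimensional K E :=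
  have ⟨f, _, _, _⟩ := hE.exists_isSplittingField
  IsSplittingField.finiteDimensional E f

theorem IsGaloisClosure.finrank_dvd_factorial {L E : IntermediateField K Ω}
    (hE : IsGaloisClosure L E) [FiniteDimensional K L] : finrank K E ∣ (finrank K L)! := by
  obtain ⟨f, hsep, hdeg, _⟩ := hE.exists_isSplittingField
  exact hdeg ▸ IsSplittingField.finrank_dvd_factorial hsep

theorem IsGaloisClosure.le_of_dvd_finrank {p : ℕ} (hp : p.Prime) {L E F : IntermediateField K Ω}
    (hd : finrank K L = p) (hE : IsGaloisClosure L E) (hFE : F ≤ E) [IsGalois K F]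
    (hdvd : p ∣ finrank K F) : E ≤ F := by
  have : FiniteDimensional K L := .of_finrank_pos (hd ▸ hp.pos)
  have := hE.finiteDimensional
  have : FiniteDimensional K F :=
    .of_injective (inclusion hFE).toLinearMap (inclusion_injective hFE)
  refine hE.2.2 F ?_ ‹_›
  refine (L.le_or_inf_eq_bot_of_finrank_prime (hd ▸ hp) F).resolve_right fun hLF => ?_
  have hdisj : F.LinearDisjoint L := .of_inf_eq_bot (inf_comm L F ▸ hLF)
  have hsq : p * p ∣ finrank K E := calc
    p * p ∣ finrank K F * finrank K L := mul_dvd_mul hdvd hd.symm.dvd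
    _ = finrank K ↥(F ⊔ L) := hdisj.finrank_sup.symm
    _ ∣ finrank K E := finrank_dvd_of_le_right (sup_le hFE hE.1)
  exact hp.not_mul_self_dvd_factorial (hd ▸ hsq.trans hE.finrank_dvd_factorial)

end

theorem galois_closures_coprime_or_eq_general
    (K Ω : Type*) [Field K] [Field Ω] [Algebra K Ω]
    (p : ℕ) (hp : p.Prime)
    (L₁ L₂ E₁ E₂ : IntermediateField K Ω)
    (hd₁ : Module.finrank K ↥L₁ = p) (hd₂ : Module.finrank K ↥L₂ = p)
    (hE₁ : IsGaloisClosure L₁ E₁) (hE₂ : IsGaloisClosure L₂ E₂) :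
    Nat.Coprime (Module.finrank K ↥(E₁ ⊓ E₂)) p ∨ E₁ = E₂ := by
  refine (Nat.coprime_or_dvd_of_prime hp _).imp Nat.Coprime.symm fun hdvd => ?_
  have := hE₁.2.1
  have := hE₂.2.1
  have : IsGalois K ↥(E₁ ⊓ E₂) :=
    { to_isSeparable := .of_algHom K E₁ (inclusion inf_le_left) }
  exact le_antisymm ((hE₁.le_of_dvd_finrank hp hd₁ inf_le_left hdvd).trans inf_le_right)
    ((hE₂.le_of_dvd_finrank hp hd₂ inf_le_right hdvd).trans inf_le_left)

/-- Let `p` be a prime, let `L₁, L₂` be separable extensions of degree `p` of a field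
`K`, and let `E₁, E₂` be their Galois closures over `K`.  Then either `[E₁ ∩ E₂ : K]`
is prime to `p`, or `E₁ = E₂`. -/
theorem galois_closures_coprime_or_eq
    (K Ω : Type*) [Field K] [Field Ω] [Algebra K Ω] [IsSepClosure K Ω]
    (p : ℕ) (hp : p.Prime)
    (L₁ L₂ E₁ E₂ : IntermediateField K Ω)
    [Algebra.IsSeparable K ↥L₁] [Algebra.IsSeparable K ↥L₂]
    (hd₁ : Module.finrank K ↥L₁ = p) (hd₂ : Module.finrank K ↥L₂ = p)
    (hE₁ : IsGaloisClosure L₁ E₁) (hE₂ : IsGaloisClosure L₂ E₂) :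
    Nat.Coprime (Module.finrank K ↥(E₁ ⊓ E₂)) p ∨ E₁ = E₂ :=
  galois_closures_coprime_or_eq_general K Ω p hp L₁ L₂ E₁ E₂ hd₁ hd₂ hE₁ hE₂
end
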